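/- arXiv:1703.07925 — 2 statements merged into one kernel-verified Lean document; each statement's English description precedes it below -/
import Mathlib

section
/- For every κ ∈ ℂ with κ ≠ 0 and every s ∈ ℂ, the anticommutator (E·U₊(κ,s))(E·U₋ᵇ(κ)) + (E·U₋ᵇ(κ))(E·U₊(κ,s)) equals the diagonal matrix diag(−sin s, sin s, 0) (in particular it is independent of κ); consequently, for w ∈ ℂ, the equality diag(iw, −iw, 0) = {E·U₊(κ,s), E·U₋ᵇ(κ)} holds if and only if w = i·sin s. -/
set_option maxHeartbeats 1000000

open Matrix Complex

/-- The supermatrix `E = diag(1,1,−1)`. -/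
noncomputable def Esuper : Matrix (Fin 3) (Fin 3) ℂ := !![1, 0, 0; 0, 1, 0; 0, 0, -1]

/-- The fermionic potential matrix `U₊` of the linear spectral problem of the SUSY
sine-Gordon equation, with `κ = √λ` and the superfield replaced by its body `s`. -/
noncomputable def Uplus (κ s : ℂ) : Matrix (Fin 3) (Fin 3) ℂ :=
  !![0, 0, (I / (2 * κ)) * exp (I * s);
     0, 0, (-I / (2 * κ)) * exp (-(I * s));
     (-1 / (2 * κ)) * exp (-(I * s)), (1 / (2 * κ)) * exp (I * s), 0]

/-- The bosonic (`λ`-dependent) part of the potential matrix `U₋`. -/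
noncomputable def UminusB (κ : ℂ) : Matrix (Fin 3) (Fin 3) ℂ :=
  !![0, 0, -I * κ; 0, 0, I * κ; -κ, κ, 0]

/-- for `κ ≠ 0` and `s ∈ ℂ`, the anticommutator
`{E·U₊(κ,s), E·U₋ᵇ(κ)}` equals `diag(−sin s, sin s, 0)` (independently of `κ`);
consequently `diag(iw, −iw, 0) = {E·U₊, E·U₋ᵇ}` iff `w = i sin s`. -/
theorem anticommutator_diag_sin (κ s : ℂ) (hκ : κ ≠ 0) :
    (Esuper * Uplus κ s) * (Esuper * UminusB κ) +
        (Esuper * UminusB κ) * (Esuper * Uplus κ s) =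
      !![-sin s, 0, 0; 0, sin s, 0; 0, 0, 0] ∧
    ∀ w : ℂ,
      (!![I * w, 0, 0; 0, -(I * w), 0; 0, 0, 0] =
          (Esuper * Uplus κ s) * (Esuper * UminusB κ) +
            (Esuper * UminusB κ) * (Esuper * Uplus κ s)) ↔
        w = I * sin s := by
  have hmain : (Esuper * Uplus κ s) * (Esuper * UminusB κ) +
        (Esuper * UminusB κ) * (Esuper * Uplus κ s) =
      !![-sin s, 0, 0; 0, sin s, 0; 0, 0, 0] := by
    have hsin : sin s = (exp (I * s) - exp (-(I * s))) / (2 * I) := by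
      rw [Complex.sin]
      have hI : (I:ℂ) ≠ 0 := I_ne_zero
      field_simp
      ring_nf
      simp [I_sq]
    ext i j
    fin_cases i <;> fin_cases j <;>
      simp [Esuper, Uplus, UminusB, Matrix.mul_apply, Fin.sum_univ_succ, hsin,
        Matrix.vecHead, Matrix.vecTail] <;>
      field_simp <;> ring_nf <;> simp [I_sq]
  refine ⟨hmain, fun w => ?_⟩
  rw [hmain]
  constructor
  · intro h
    rw [← Matrix.ext_iff] at h
    have h00 := h 0 0
    simp at h00
    linear_combination -I * h00 + w * I_sq
  · intro h
    rw [h]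
    ext i j
    fin_cases i <;> fin_cases j <;> simp [Matrix.vecHead, Matrix.vecTail] <;> ring_nf <;> simp [I_sq]
end

section
/- For every κ ∈ ℂ with κ ≠ 0 and every s ∈ ℂ, setting g₁₁ = (1/2)tr(U₊(κ,s)²), g₂₂ = (1/2)tr((U₋ᵇ(κ))²), and g₁₂ = −(1/2)tr(U₊(κ,s)·E·U₋ᵇ(κ)), one has g₁₁·g₂₂ + g₁₂² = sin² s; in particular, the discriminant g₁₁g₂₂ + g₁₂² vanishes whenever s = 2kπ with k ∈ ℤ. -/
open Matrix Complex

theorem trace_mul_fin_three_of_offDiagBlocks (a b c d a' b' c' d' : ℂ) :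
    (!![0, 0, a; 0, 0, b; c, d, 0] * !![0, 0, a'; 0, 0, b'; c', d', 0]).trace =
      a * c' + b * d' + c * a' + d * b' := by
  simp only [mul_fin_three, trace_fin_three_of]
  ring

theorem trace_Uplus_mul_self (κ s : ℂ) : (Uplus κ s * Uplus κ s).trace = -I / κ ^ 2 := by
  have hexp : exp (I * s) * exp (-(I * s)) = 1 := by rw [← exp_add, add_neg_cancel, exp_zero]
  rw [Uplus, trace_mul_fin_three_of_offDiagBlocks]
  linear_combination (-I / κ ^ 2) * hexp

theorem trace_UminusB_mul_self (κ : ℂ) : (UminusB κ * UminusB κ).trace = 4 * I * κ ^ 2 := by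
  rw [UminusB, trace_mul_fin_three_of_offDiagBlocks]
  ring

theorem Esuper_mul_UminusB (κ : ℂ) :
    Esuper * UminusB κ = !![0, 0, -I * κ; 0, 0, I * κ; κ, -κ, 0] := by
  rw [Esuper, UminusB, mul_fin_three]
  simp

theorem trace_Uplus_mul_Esuper_mul_UminusB {κ : ℂ} (hκ : κ ≠ 0) (s : ℂ) :
    (Uplus κ s * Esuper * UminusB κ).trace = 2 * I * cos s := by
  rw [Matrix.mul_assoc, Esuper_mul_UminusB, Uplus, trace_mul_fin_three_of_offDiagBlocks, cos,
    mul_comm s I]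
  field_simp
  ring

/-- the discriminant of the induced metric satisfies
`g₁₁g₂₂ + g₁₂² = sin²s`; in particular it vanishes when `s = 2kπ`, `k ∈ ℤ`. -/
theorem metric_discriminant_eq_sin_sq (κ s : ℂ) (hκ : κ ≠ 0) :
    let g₁₁ : ℂ := (1 / 2 : ℂ) * (Uplus κ s * Uplus κ s).trace
    let g₂₂ : ℂ := (1 / 2 : ℂ) * (UminusB κ * UminusB κ).trace
    let g₁₂ : ℂ := -(1 / 2 : ℂ) * (Uplus κ s * Esuper * UminusB κ).trace
    g₁₁ * g₂₂ + g₁₂ ^ 2 = sin s ^ 2 ∧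
    (∀ k : ℤ, s = 2 * (k : ℂ) * (Real.pi : ℂ) → g₁₁ * g₂₂ + g₁₂ ^ 2 = 0) := by
  intro g₁₁ g₂₂ g₁₂
  have discriminant_eq : g₁₁ * g₂₂ + g₁₂ ^ 2 = sin s ^ 2 := by
    simp only [g₁₁, g₂₂, g₁₂, trace_Uplus_mul_self, trace_UminusB_mul_self,
      trace_Uplus_mul_Esuper_mul_UminusB hκ]
    have hκ2 : I / κ ^ 2 * κ ^ 2 = I := div_mul_cancel₀ I (pow_ne_zero 2 hκ)
    linear_combination (-I) * hκ2 + (cos s ^ 2 - 1) * I_sq - sin_sq_add_cos_sq s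
  refine ⟨discriminant_eq, fun k hk => ?_⟩
  have hsin : sin s = 0 := by
    rw [hk, show 2 * (k : ℂ) * Real.pi = ((2 * k : ℤ) : ℂ) * Real.pi by push_cast; ring]
    exact sin_int_mul_pi _
  rw [discriminant_eq, hsin, zero_pow two_ne_zero]
end
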